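/- arXiv:2309.07089 — 3 statements merged into one kernel-verified Lean document; each statement's English description precedes it below -/
import Mathlib

section
/- Let G be a simple graph on n vertices and let h, k be integers with 1 ≤ h < k ≤ n/2. If v is an eigenvector of the Laplacian matrix L(F_h(G)) with eigenvalue λ, then Bv is nonzero and is an eigenvector of the Laplacian matrix L(F_k(G)) with the same eigenvalue λ, where B is the inclusion matrix from h-subsets to k-subsets. -/
open Finset Polynomial Real Matrix

noncomputable section

/-- The `k`-token graph of a simple graph `G`. -/
def tokenGraph {V : Type*} [DecidableEq V] (G : SimpleGraph V) (k : ℕ) :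
    SimpleGraph {s : Finset V // s.card = k} where
  Adj A B := ∃ a b, G.Adj a b ∧ a ∈ A.1 ∧ b ∈ B.1 ∧ symmDiff A.1 B.1 = {a, b}
  symm := by
    constructor
    rintro A B ⟨a, b, hab, ha, hb, hd⟩
    exact ⟨b, a, hab.symm, hb, ha, by rw [symmDiff_comm, hd, Finset.pair_comm]⟩
  loopless := by
    constructor
    rintro A ⟨a, b, hab, ha, hb, hd⟩
    rw [symmDiff_self, Finset.bot_eq_empty] at hd
    exact (Finset.insert_ne_empty a {b}) hd.symm

/-- The Laplacian matrix (over ℝ) of a finite simple graph. -/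
def lapMat {V : Type*} [Fintype V] [DecidableEq V] (G : SimpleGraph V) : Matrix V V ℝ :=
  letI := Classical.decRel G.Adj
  G.lapMatrix ℝ

/-- The Laplacian matrix (over ℂ) of a finite simple graph. -/
def lapMatC {V : Type*} [Fintype V] [DecidableEq V] (G : SimpleGraph V) : Matrix V V ℂ :=
  letI := Classical.decRel G.Adj
  G.lapMatrix ℂ

/-- The Laplacian eigenvalues of `G`, with multiplicity, in nondecreasing order. -/
def lapSpec {V : Type*} [Fintype V] [DecidableEq V] (G : SimpleGraph V) : List ℝ :=
  ((lapMat G).charpoly.roots).sort (· ≤ ·)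

/-- The algebraic connectivity: the second-smallest Laplacian eigenvalue. -/
def algConn {V : Type*} [Fintype V] [DecidableEq V] (G : SimpleGraph V) : ℝ :=
  (lapSpec G).getD 1 0

/-- The largest Laplacian eigenvalue (Laplacian spectral radius). -/
def lapSpecRadius {V : Type*} [Fintype V] [DecidableEq V] (G : SimpleGraph V) : ℝ :=
  (lapSpec G).getLastD 0

/-- `μ` is an eigenvalue of the Laplacian matrix of `G`. -/
def IsLapEigen {V : Type*} [Fintype V] [DecidableEq V] (G : SimpleGraph V) (μ : ℝ) : Prop :=
  ∃ v : V → ℝ, v ≠ 0 ∧ (lapMat G).mulVec v = μ • v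

/-- The induced subgraph of `G` on the complement of the vertex `i` (i.e. `G ∖ i`). -/
def deleteVert {V : Type*} (G : SimpleGraph V) (i : V) : SimpleGraph {v : V // v ≠ i} :=
  SimpleGraph.comap Subtype.val G

/-- The cycle graph on `ℤ/nℤ`, where `i` is adjacent to `i ± 1`. -/
def cycleG (n : ℕ) : SimpleGraph (ZMod n) where
  Adj x y := x ≠ y ∧ (x - y = 1 ∨ y - x = 1)
  symm := by constructor; rintro x y ⟨hxy, h⟩; exact ⟨hxy.symm, h.symm⟩
  loopless := by constructor; rintro x ⟨hx, _⟩; exact hx rfl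

/-- The inclusion matrix from `h`-subsets to `k`-subsets: rows indexed by `k`-subsets `A`,
columns by `h`-subsets `X`, with entry `1` if `X ⊆ A` and `0` otherwise. -/
def inclMatrix (V : Type*) [Fintype V] [DecidableEq V] (h k : ℕ) :
    Matrix {s : Finset V // s.card = k} {s : Finset V // s.card = h} ℝ :=
  fun A X => if X.1 ⊆ A.1 then 1 else 0

/-- The `(n;k)`-binomial matrix: rows indexed by `k`-subsets `A`, columns by vertices `j`,
with entry `1` if `j ∈ A` and `0` otherwise. -/
def binomMatrix (V : Type*) [Fintype V] [DecidableEq V] (k : ℕ) :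
    Matrix {s : Finset V // s.card = k} V ℝ :=
  fun A j => if j ∈ A.1 then 1 else 0

/-- The Kneser graph `K(n,k)`. -/
def kneserGraph (n k : ℕ) : SimpleGraph {s : Finset (Fin n) // s.card = k} where
  Adj A B := A ≠ B ∧ Disjoint A.1 B.1
  symm := by constructor; rintro A B ⟨h1, h2⟩; exact ⟨h1.symm, h2.symm⟩
  loopless := by constructor; rintro A ⟨h1, _⟩; exact h1 rfl

end

/-!
Write `L_k` for the Laplacian of `F_k(G)` and `B_{h,k}` for the inclusion matrix. Counting every
edge in both orientations, `2 (L_k w)(A) = ∑_{a ~ b} (w A - w (τ_{ab} A))`, where the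
transposition `τ_{ab} = (a b)` acts on sets. Since `B_{h,k}` commutes with the action of
permutations on sets, `L_k B_{h,k} = B_{h,k} L_h`, so `B_{h,k} v` is a `λ`-eigenvector or zero.

It is not zero: on functions on all subsets of the `n` vertices, the up and down operators
`U f (S) = ∑_{x ∈ S} f (S - x)` and `D f (X) = ∑_{y ∉ X} f (X + y)` satisfy
`D U - U D = n - 2|X|`, hence `‖U f‖² = ‖D f‖² + ∑_X (n - 2|X|) f(X)²`, and `U` is injective on
functions supported on sets of size `< n/2`. As `U B_{h,j} = (j + 1 - h) B_{h,j+1}`,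
`B_{h,k} v = 0` forces `B_{h,k-1} v = 0`, and so on down to `B_{h,h} v = v = 0`.
Functions on the level `{s // s.card = j}` are moved to `Finset V` by extending them by zero.
-/

namespace Finset

theorem sum_powersetCard_map {V W M : Type*} [AddCommMonoid M] (e : V ↪ W) (A : Finset V)
    (h : ℕ) (F : Finset W → M) :
    ∑ X ∈ (A.map e).powersetCard h, F X = ∑ X ∈ A.powersetCard h, F (X.map e) := by
  rw [powersetCard_map, sum_map]
  rfl

variable {V : Type*} [DecidableEq V]

theorem map_swap_eq_symmDiff {A : Finset V} {a b : V} (ha : a ∈ A) (hb : b ∉ A) :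
    A.map (Equiv.swap a b).toEmbedding = symmDiff A {a, b} := by
  ext x
  simp only [mem_map_equiv, Equiv.symm_swap, mem_symmDiff, mem_insert, mem_singleton]
  rcases eq_or_ne x a with rfl | hxa
  · simp [ha, hb]
  rcases eq_or_ne x b with rfl | hxb
  · simp [ha, hb]
  simp [Equiv.swap_apply_of_ne_of_ne hxa hxb, hxa, hxb]

theorem map_swap_eq_self {A : Finset V} {a b : V} (hab : a ∈ A ↔ b ∈ A) :
    A.map (Equiv.swap a b).toEmbedding = A := by
  ext x
  simp only [mem_map_equiv, Equiv.symm_swap]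
  rcases eq_or_ne x a with rfl | hxa
  · simp [hab]
  rcases eq_or_ne x b with rfl | hxb
  · simp [hab]
  simp [Equiv.swap_apply_of_ne_of_ne hxa hxb]

theorem sum_sum_powersetCard_erase {M : Type*} [AddCommMonoid M] (T : Finset V) (h : ℕ)
    (F : Finset V → M) :
    ∑ x ∈ T, ∑ X ∈ (T.erase x).powersetCard h, F X =
      ∑ X ∈ T.powersetCard h, (T.card - h) • F X := by
  rw [sum_comm' (t' := T.powersetCard h) (s' := fun X => T \ X) fun x X => ?_]
  · refine sum_congr rfl fun X hX => ?_
    obtain ⟨hXT, hX⟩ := mem_powersetCard.1 hX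
    rw [sum_const, card_sdiff_of_subset hXT, hX]
  · simp only [mem_powersetCard, mem_sdiff, subset_erase]
    tauto

end Finset

theorem Function.extend_subtype_val_apply {α γ : Type*} {p : α → Prop} (g : Subtype p → γ)
    (e' : α → γ) (a : α) (ha : p a) : Function.extend Subtype.val g e' a = g ⟨a, ha⟩ :=
  Subtype.val_injective.extend_apply g e' ⟨a, ha⟩

theorem Function.extend_subtype_val_apply_of_not {α γ : Type*} {p : α → Prop}
    (g : Subtype p → γ) (e' : α → γ) (a : α) (ha : ¬p a) :
    Function.extend Subtype.val g e' a = e' a :=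
  Function.extend_apply' g e' a fun ⟨b, hb⟩ => ha (hb ▸ b.2)

open Function

theorem tokenGraph_adj_iff {V : Type*} [DecidableEq V] (G : SimpleGraph V) {k : ℕ}
    (A B : {s : Finset V // s.card = k}) :
    (tokenGraph G k).Adj A B ↔
      ∃ a ∈ A.1, ∃ b ∉ A.1, G.Adj a b ∧ B.1 = A.1.map (Equiv.swap a b).toEmbedding := by
  constructor
  · rintro ⟨a, b, hab, ha, hb, hAB⟩
    have hbA : b ∉ A.1 := fun hbA => by
      have : b ∈ symmDiff A.1 B.1 := by simp [hAB]
      rw [mem_symmDiff] at this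
      tauto
    refine ⟨a, ha, b, hbA, hab, ?_⟩
    rw [map_swap_eq_symmDiff ha hbA, ← hAB, symmDiff_symmDiff_cancel_left]
  · rintro ⟨a, ha, b, hb, hab, hB⟩
    refine ⟨a, b, hab, ha, ?_, ?_⟩
    · simp [hB, ha]
    · rw [hB, map_swap_eq_symmDiff ha hb, symmDiff_symmDiff_cancel_left]

section Laplacian

variable {V : Type*} [Fintype V] [DecidableEq V]

theorem lapMat_mulVec_apply (G : SimpleGraph V) [DecidableRel G.Adj] (w : V → ℝ) (x : V) :
    (lapMat G *ᵥ w) x = ∑ y ∈ G.neighborFinset x, (w x - w y) := by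
  have hL : lapMat G = G.lapMatrix ℝ := by unfold lapMat; congr!
  rw [hL, SimpleGraph.lapMatrix_mulVec_apply, sum_sub_distrib, sum_const,
    SimpleGraph.card_neighborFinset_eq_degree, nsmul_eq_mul]

theorem lapMat_tokenGraph_mulVec_apply (G : SimpleGraph V) [DecidableRel G.Adj] {k : ℕ}
    (w : {s : Finset V // s.card = k} → ℝ) (A : {s : Finset V // s.card = k}) :
    (lapMat (tokenGraph G k) *ᵥ w) A =
      ∑ p ∈ (A.1 ×ˢ A.1ᶜ).filter (fun p => G.Adj p.1 p.2),
        (extend Subtype.val w 0 A.1 -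
          extend Subtype.val w 0 (A.1.map (Equiv.swap p.1 p.2).toEmbedding)) := by
  classical
  rw [lapMat_mulVec_apply]
  refine (sum_bij (fun p _ => ⟨A.1.map (Equiv.swap p.1 p.2).toEmbedding, (card_map _).trans A.2⟩)
    ?_ ?_ ?_ ?_).symm
  · rintro ⟨a, b⟩ hp
    simp only [mem_filter, mem_product, mem_compl] at hp
    rw [SimpleGraph.mem_neighborFinset, tokenGraph_adj_iff]
    exact ⟨a, hp.1.1, b, hp.1.2, hp.2, rfl⟩
  · rintro ⟨a, b⟩ hp ⟨a', b'⟩ hp' hpp'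
    simp only [mem_filter, mem_product, mem_compl] at hp hp'
    have hpair : ({a, b} : Finset V) = {a', b'} := by
      have := congrArg Subtype.val hpp'
      simp only at this
      rwa [map_swap_eq_symmDiff hp.1.1 hp.1.2, map_swap_eq_symmDiff hp'.1.1 hp'.1.2,
        symmDiff_right_inj] at this
    have ha : a ∈ ({a', b'} : Finset V) := hpair ▸ mem_insert_self a {b}
    have hb : b ∈ ({a', b'} : Finset V) := hpair ▸ mem_insert_of_mem (mem_singleton_self b)
    simp only [mem_insert, mem_singleton] at ha hb
    grind
  · intro B hB
    rw [SimpleGraph.mem_neighborFinset, tokenGraph_adj_iff] at hB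
    obtain ⟨a, ha, b, hb, hab, hB⟩ := hB
    exact ⟨(a, b), by simp [ha, hb, hab], Subtype.ext hB.symm⟩
  · intro p _
    rw [extend_subtype_val_apply _ _ A.1 A.2, extend_subtype_val_apply]

theorem sum_adj_sub_map_swap {M : Type*} [AddCommGroup M] (G : SimpleGraph V)
    [DecidableRel G.Adj] (f : Finset V → M) (A : Finset V) :
    ∑ p ∈ univ.filter (fun p : V × V => G.Adj p.1 p.2),
        (f A - f (A.map (Equiv.swap p.1 p.2).toEmbedding)) =
      2 • ∑ p ∈ (A ×ˢ Aᶜ).filter (fun p => G.Adj p.1 p.2),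
        (f A - f (A.map (Equiv.swap p.1 p.2).toEmbedding)) := by
  set g : V × V → M := fun p => f A - f (A.map (Equiv.swap p.1 p.2).toEmbedding)
  have hswap : ∑ p ∈ (Aᶜ ×ˢ A).filter (fun p => G.Adj p.1 p.2), g p =
      ∑ p ∈ (A ×ˢ Aᶜ).filter (fun p => G.Adj p.1 p.2), g p := by
    refine sum_equiv (Equiv.prodComm V V) (fun p => ?_) (fun p _ => ?_)
    · simp only [mem_filter, mem_product, Equiv.prodComm_apply, Prod.fst_swap, Prod.snd_swap]
      exact ⟨fun h => ⟨h.1.symm, h.2.symm⟩, fun h => ⟨h.1.symm, h.2.symm⟩⟩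
    · simp only [g, Equiv.prodComm_apply, Prod.fst_swap, Prod.snd_swap, Equiv.swap_comm]
  have hdisj : Disjoint ((A ×ˢ Aᶜ).filter (fun p => G.Adj p.1 p.2))
      ((Aᶜ ×ˢ A).filter (fun p => G.Adj p.1 p.2)) := by
    rw [disjoint_left]
    simp +contextual [mem_filter, mem_product]
  rw [two_nsmul]
  nth_rewrite 2 [← hswap]
  rw [← sum_union hdisj]
  refine (sum_subset (fun p => by simp only [mem_union, mem_filter, mem_univ, true_and]; tauto)
    fun p hp hp' => ?_).symm
  simp only [mem_union, mem_filter, mem_product, mem_compl, mem_univ, true_and] at hp hp'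
  simp only [map_swap_eq_self (by tauto : p.1 ∈ A ↔ p.2 ∈ A), sub_self]

theorem two_mul_lapMat_tokenGraph_mulVec_apply (G : SimpleGraph V) [DecidableRel G.Adj] {k : ℕ}
    (w : {s : Finset V // s.card = k} → ℝ) (A : {s : Finset V // s.card = k}) :
    2 * (lapMat (tokenGraph G k) *ᵥ w) A =
      ∑ p ∈ univ.filter (fun p : V × V => G.Adj p.1 p.2),
        (extend Subtype.val w 0 A.1 -
          extend Subtype.val w 0 (A.1.map (Equiv.swap p.1 p.2).toEmbedding)) := by
  rw [sum_adj_sub_map_swap, lapMat_tokenGraph_mulVec_apply, two_nsmul, two_mul]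

end Laplacian

section InclusionMatrix

variable {V : Type*} [Fintype V] [DecidableEq V]

theorem inclMatrix_mulVec_apply {h k : ℕ} (v : {s : Finset V // s.card = h} → ℝ)
    (A : {s : Finset V // s.card = k}) :
    (inclMatrix V h k *ᵥ v) A = ∑ X ∈ A.1.powersetCard h, extend Subtype.val v 0 X := by
  simp only [mulVec, dotProduct, inclMatrix, ite_mul, one_mul, zero_mul, sum_ite,
    sum_const_zero, add_zero]
  refine sum_bij (fun X _ => X.1) (fun X hX => ?_) (fun X _ Y _ => Subtype.ext)
    (fun Y hY => ?_) (fun X _ => (extend_subtype_val_apply _ _ X.1 X.2).symm)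
  · exact mem_powersetCard.2 ⟨(mem_filter.1 hX).2, X.2⟩
  · obtain ⟨hYA, hY⟩ := mem_powersetCard.1 hY
    exact ⟨⟨Y, hY⟩, mem_filter.2 ⟨mem_univ _, hYA⟩, rfl⟩

theorem extend_inclMatrix_mulVec_of_card {h k : ℕ} (v : {s : Finset V // s.card = h} → ℝ)
    {S : Finset V} (hS : S.card = k) :
    extend Subtype.val (inclMatrix V h k *ᵥ v) 0 S =
      ∑ X ∈ S.powersetCard h, extend Subtype.val v 0 X := by
  rw [extend_subtype_val_apply _ _ S hS, inclMatrix_mulVec_apply]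

theorem inclMatrix_self_mulVec {h : ℕ} (v : {s : Finset V // s.card = h} → ℝ) :
    inclMatrix V h h *ᵥ v = v := by
  funext ⟨S, hS⟩
  subst hS
  rw [inclMatrix_mulVec_apply, powersetCard_self, sum_singleton,
    extend_subtype_val_apply v 0 S rfl]

theorem lapMat_tokenGraph_mulVec_inclMatrix_mulVec (G : SimpleGraph V) {h k : ℕ}
    (v : {s : Finset V // s.card = h} → ℝ) :
    lapMat (tokenGraph G k) *ᵥ (inclMatrix V h k *ᵥ v) =
      inclMatrix V h k *ᵥ (lapMat (tokenGraph G h) *ᵥ v) := by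
  classical
  funext A
  set F := extend Subtype.val v 0
  apply mul_left_cancel₀ (two_ne_zero' ℝ)
  rw [two_mul_lapMat_tokenGraph_mulVec_apply, inclMatrix_mulVec_apply, mul_sum]
  calc _ = ∑ p ∈ univ.filter (fun p : V × V => G.Adj p.1 p.2), ∑ X ∈ A.1.powersetCard h,
          (F X - F (X.map (Equiv.swap p.1 p.2).toEmbedding)) := by
        refine sum_congr rfl fun p _ => ?_
        rw [extend_inclMatrix_mulVec_of_card v A.2,
          extend_inclMatrix_mulVec_of_card v ((card_map _).trans A.2), sum_powersetCard_map,
          sum_sub_distrib]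
    _ = _ := sum_comm
    _ = _ := sum_congr rfl fun X hX => by
        rw [extend_subtype_val_apply _ _ X (mem_powersetCard.1 hX).2,
          two_mul_lapMat_tokenGraph_mulVec_apply]

end InclusionMatrix

def booleanUp {V M : Type*} [DecidableEq V] [AddCommMonoid M] (f : Finset V → M)
    (S : Finset V) : M :=
  ∑ x ∈ S, f (S.erase x)

def booleanDown {V M : Type*} [Fintype V] [DecidableEq V] [AddCommMonoid M] (f : Finset V → M)
    (X : Finset V) : M :=
  ∑ y ∈ Xᶜ, f (insert y X)

section UpDown

variable {V R : Type*} [Fintype V] [DecidableEq V] [CommRing R]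

theorem booleanDown_booleanUp_sub_booleanUp_booleanDown (f : Finset V → R) (X : Finset V) :
    booleanDown (booleanUp f) X - booleanUp (booleanDown f) X =
      ((Fintype.card V : R) - 2 * X.card) * f X := by
  have hdu : booleanDown (booleanUp f) X =
      Xᶜ.card • f X + ∑ y ∈ Xᶜ, ∑ x ∈ X, f (insert y (X.erase x)) := by
    rw [booleanDown, ← sum_const, ← sum_add_distrib]
    refine sum_congr rfl fun y hy => ?_
    have hyX : y ∉ X := mem_compl.1 hy
    rw [booleanUp, sum_insert hyX, erase_insert hyX]
    congr 1
    exact sum_congr rfl fun x hx =>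
      congrArg f <| erase_insert_of_ne (ne_of_mem_of_not_mem hx hyX).symm
  have hud : booleanUp (booleanDown f) X =
      X.card • f X + ∑ x ∈ X, ∑ y ∈ Xᶜ, f (insert y (X.erase x)) := by
    rw [booleanUp, ← sum_const, ← sum_add_distrib]
    refine sum_congr rfl fun x hx => ?_
    rw [booleanDown, compl_erase, sum_insert (notMem_compl.2 hx), insert_erase hx]
  rw [hdu, hud, sum_comm, card_compl, nsmul_eq_mul, nsmul_eq_mul,
    Nat.cast_sub (card_le_univ X)]
  ring

theorem sum_booleanUp_mul (f g : Finset V → R) :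
    ∑ S, booleanUp f S * g S = ∑ X, f X * booleanDown g X := by
  simp only [booleanUp, booleanDown, sum_mul, mul_sum]
  rw [sum_sigma', sum_sigma']
  refine sum_nbij' (fun p => ⟨p.1.erase p.2, p.2⟩) (fun p => ⟨insert p.2 p.1, p.2⟩)
    ?_ ?_ ?_ ?_ ?_
  · rintro ⟨S, x⟩ -
    simp
  · rintro ⟨X, y⟩ -
    simp
  · rintro ⟨S, x⟩ hp
    simp only [mem_sigma, mem_univ, true_and] at hp
    simp [insert_erase hp]
  · rintro ⟨X, y⟩ hp
    simp only [mem_sigma, mem_univ, true_and, mem_compl] at hp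
    simp [erase_insert hp]
  · rintro ⟨S, x⟩ hp
    simp only [mem_sigma, mem_univ, true_and] at hp
    simp [insert_erase hp]

theorem sum_sq_booleanUp (f : Finset V → ℝ) :
    ∑ S, booleanUp f S ^ 2 =
      ∑ X, booleanDown f X ^ 2 + ∑ X, ((Fintype.card V : ℝ) - 2 * X.card) * f X ^ 2 := by
  have hcomm : ∀ X, booleanDown (booleanUp f) X =
      booleanUp (booleanDown f) X + ((Fintype.card V : ℝ) - 2 * X.card) * f X := fun X => by
    rw [← booleanDown_booleanUp_sub_booleanUp_booleanDown]
    ring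
  calc ∑ S, booleanUp f S ^ 2 = ∑ X, f X * booleanDown (booleanUp f) X := by
        simp only [sq, sum_booleanUp_mul]
    _ = ∑ X, booleanUp (booleanDown f) X * f X +
          ∑ X, ((Fintype.card V : ℝ) - 2 * X.card) * f X ^ 2 := by
        rw [← sum_add_distrib]
        exact sum_congr rfl fun X _ => by rw [hcomm]; ring
    _ = _ := by simp only [sum_booleanUp_mul, sq]

theorem eq_zero_of_booleanUp_eq_zero {f : Finset V → ℝ}
    (hf : ∀ X, f X ≠ 0 → 2 * X.card < Fintype.card V) (hup : booleanUp f = 0) : f = 0 := by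
  have hterm : ∀ X, 0 ≤ ((Fintype.card V : ℝ) - 2 * X.card) * f X ^ 2 := fun X => by
    by_cases hX : f X = 0
    · simp [hX]
    · have : (2 * X.card : ℝ) < Fintype.card V := by exact_mod_cast hf X hX
      exact mul_nonneg (by linarith) (sq_nonneg _)
  have hsum := sum_sq_booleanUp f
  simp only [hup, Pi.zero_apply, zero_pow two_ne_zero, sum_const_zero] at hsum
  have hzero := (sum_eq_zero_iff_of_nonneg fun X _ => hterm X).1
    (by linarith [sum_nonneg fun X (_ : X ∈ univ) => sq_nonneg (booleanDown f X),
      sum_nonneg fun X (_ : X ∈ univ) => hterm X])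
  funext X
  by_contra hX
  have hcard : (2 * X.card : ℝ) < Fintype.card V := by exact_mod_cast hf X hX
  have hpos : 0 < f X ^ 2 := pow_two_pos_of_ne_zero hX
  nlinarith [hzero X (mem_univ X)]

theorem booleanUp_extend_inclMatrix_mulVec {h j : ℕ} (v : {s : Finset V // s.card = h} → ℝ) :
    booleanUp (extend Subtype.val (inclMatrix V h j *ᵥ v) 0) =
      ((j + 1 - h : ℕ) : ℝ) • extend Subtype.val (inclMatrix V h (j + 1) *ᵥ v) 0 := by
  funext T
  rw [Pi.smul_apply, smul_eq_mul, booleanUp]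
  by_cases hT : T.card = j + 1
  · have herase : ∀ x ∈ T, (T.erase x).card = j := fun x hx => by
      rw [card_erase_of_mem hx, hT, Nat.add_sub_cancel]
    rw [sum_congr rfl fun x hx => extend_inclMatrix_mulVec_of_card v (herase x hx),
      extend_inclMatrix_mulVec_of_card v hT, sum_sum_powersetCard_erase, hT, mul_sum]
    simp only [nsmul_eq_mul]
  · rw [extend_subtype_val_apply_of_not _ _ T hT, Pi.zero_apply, mul_zero]
    refine sum_eq_zero fun x hx => extend_subtype_val_apply_of_not _ _ _ fun hx' => hT ?_
    rw [← hx', card_erase_of_mem hx, Nat.sub_add_cancel (card_pos.2 ⟨x, hx⟩)]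

theorem inclMatrix_mulVec_eq_zero_of_succ {h j : ℕ} (hj : 2 * j < Fintype.card V)
    {v : {s : Finset V // s.card = h} → ℝ} (hv : inclMatrix V h (j + 1) *ᵥ v = 0) :
    inclMatrix V h j *ᵥ v = 0 := by
  set f := extend Subtype.val (inclMatrix V h j *ᵥ v) 0
  have hf : ∀ X, f X ≠ 0 → 2 * X.card < Fintype.card V := fun X hX => by
    by_cases hXj : X.card = j
    · rwa [hXj]
    · exact absurd (extend_subtype_val_apply_of_not _ _ X hXj) hX
  have hup : booleanUp f = 0 := by
    rw [booleanUp_extend_inclMatrix_mulVec, hv,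
      show extend Subtype.val (0 : {s : Finset V // s.card = j + 1} → ℝ) 0 = 0 from
        extend_const _ 0, smul_zero]
  funext A
  simpa [f, extend_subtype_val_apply (inclMatrix V h j *ᵥ v) 0 A.1 A.2] using
    congrFun (eq_zero_of_booleanUp_eq_zero hf hup) A.1

theorem eq_zero_of_inclMatrix_mulVec_eq_zero {h k : ℕ} (hhk : h ≤ k)
    (hk : 2 * k ≤ Fintype.card V) {v : {s : Finset V // s.card = h} → ℝ}
    (hv : inclMatrix V h k *ᵥ v = 0) : v = 0 := by
  induction k, hhk using Nat.le_induction with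
  | base => rwa [inclMatrix_self_mulVec] at hv
  | succ j _ ih => exact ih (by omega) (inclMatrix_mulVec_eq_zero_of_succ (by omega) hv)

end UpDown

theorem stmt_0_general {n h k : ℕ} (G : SimpleGraph (Fin n)) (hhk : h < k)
    (hk : k ≤ n / 2) (lam : ℝ) (v : {s : Finset (Fin n) // s.card = h} → ℝ)
    (hv : v ≠ 0) (heig : (lapMat (tokenGraph G h)).mulVec v = lam • v) :
    (inclMatrix (Fin n) h k).mulVec v ≠ 0 ∧
      (lapMat (tokenGraph G k)).mulVec ((inclMatrix (Fin n) h k).mulVec v) =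
        lam • ((inclMatrix (Fin n) h k).mulVec v) := by
  refine ⟨fun hB => hv (eq_zero_of_inclMatrix_mulVec_eq_zero hhk.le ?_ hB), ?_⟩
  · rw [Fintype.card_fin]
    omega
  · rw [lapMat_tokenGraph_mulVec_inclMatrix_mulVec, heig, mulVec_smul]

theorem stmt_0 {n h k : ℕ} (G : SimpleGraph (Fin n)) (h1 : 1 ≤ h) (hhk : h < k)
    (hk : k ≤ n / 2) (lam : ℝ) (v : {s : Finset (Fin n) // s.card = h} → ℝ)
    (hv : v ≠ 0) (heig : (lapMat (tokenGraph G h)).mulVec v = lam • v) :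
    (inclMatrix (Fin n) h k).mulVec v ≠ 0 ∧
      (lapMat (tokenGraph G k)).mulVec ((inclMatrix (Fin n) h k).mulVec v) =
        lam • ((inclMatrix (Fin n) h k).mulVec v) :=
  stmt_0_general G hhk hk lam v hv heig
end

section
/- Let G be a simple graph on n vertices and let h, k be integers with 1 ≤ h < k ≤ n/2. If u is an eigenvector of the Laplacian matrix L(F_k(G)) with eigenvalue λ and Bᵀu ≠ 0, then Bᵀu is an eigenvector of the Laplacian matrix L(F_h(G)) with the same eigenvalue λ, where B is the inclusion matrix from h-subsets to k-subsets. -/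
open Finset Polynomial Real Matrix

/-! For a dart `(a, b)` of `G`, let `τ` be the action of the transposition `(a b)` on
`k`-subsets. `f A - f (τ A)` vanishes unless `A` contains exactly one of `a`, `b`, and then `τ A`
is the neighbour of `A` in `F_k(G)` obtained by moving a token along the edge; every neighbour
arises from exactly one dart leaving `A`, and reversing the dart does not change the term. Hence
`2 L(F_k(G)) f = ∑_{(a, b)} (f - f ∘ τ)`. Since `Bᵀ` commutes with the action of every vertex
permutation, `Bᵀ L(F_k(G)) = L(F_h(G)) Bᵀ`, so `Bᵀ` maps `λ`-eigenvectors into the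
`λ`-eigenspace. -/

open Equiv

section

variable {V : Type*}

def tokenPerm (σ : Perm V) (k : ℕ) : Perm {s : Finset V // s.card = k} :=
  (Equiv.finsetCongr σ).subtypeEquiv fun s => by simp

@[simp]
lemma coe_tokenPerm_apply (σ : Perm V) {k : ℕ} (A : {s : Finset V // s.card = k}) :
    (tokenPerm σ k A).1 = A.1.map σ.toEmbedding :=
  rfl

lemma inclMatrix_transpose_mulVec_comp_tokenPerm [Fintype V] [DecidableEq V] (σ : Perm V)
    (h k : ℕ) (f : {s : Finset V // s.card = k} → ℝ) :
    (inclMatrix V h k)ᵀ *ᵥ (f ∘ tokenPerm σ k) =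
      ((inclMatrix V h k)ᵀ *ᵥ f) ∘ tokenPerm σ h := by
  ext X
  simp only [Function.comp_apply, mulVec, dotProduct, transpose_apply, inclMatrix]
  conv_rhs => rw [← Equiv.sum_comp (tokenPerm σ k)]
  simp only [coe_tokenPerm_apply, Finset.map_subset_map]

variable [DecidableEq V]

lemma Finset.map_swap_eq_symmDiff_s1 {s : Finset V} {a b : V} (ha : a ∈ s) (hb : b ∉ s) :
    s.map (swap a b).toEmbedding = symmDiff s {a, b} := by
  ext x
  rw [mem_map_equiv, symm_swap, mem_symmDiff, mem_insert, mem_singleton, swap_apply_def]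
  split_ifs with hxa hxb <;> subst_vars <;> tauto

lemma Finset.map_swap_eq_self_s1 {s : Finset V} {a b : V} (h : a ∈ s ↔ b ∈ s) :
    s.map (swap a b).toEmbedding = s := by
  ext x
  rw [mem_map_equiv, symm_swap, swap_apply_def]
  split_ifs with hxa hxb <;> subst_vars <;> tauto

lemma Finset.eq_and_eq_of_pair_eq_pair {s : Finset V} {a b c d : V} (ha : a ∈ s) (hd : d ∉ s)
    (h : ({a, b} : Finset V) = {c, d}) : a = c ∧ b = d := by
  have hset : ({a, b} : Set V) = {c, d} := by simpa using congrArg ((↑) : Finset V → Set V) h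
  rcases Set.pair_eq_pair_iff.mp hset with h | ⟨rfl, -⟩
  · exact h
  · exact absurd ha hd

variable {G : SimpleGraph V} {k : ℕ}

lemma tokenGraph_adj_tokenPerm_swap {A : {s : Finset V // s.card = k}} (d : G.Dart)
    (ha : d.fst ∈ A.1) (hb : d.snd ∉ A.1) :
    (tokenGraph G k).Adj A (tokenPerm (swap d.fst d.snd) k A) := by
  refine ⟨d.fst, d.snd, d.adj, ha, ?_, ?_⟩ <;>
    simp only [coe_tokenPerm_apply, Finset.map_swap_eq_symmDiff_s1 ha hb]
  · simp [Finset.mem_symmDiff, hb]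
  · exact symmDiff_symmDiff_cancel_left _ _

variable [Fintype V]

lemma lapMat_eq_lapMatrix [DecidableRel G.Adj] : lapMat G = G.lapMatrix ℝ := by
  unfold lapMat
  congr

lemma sum_neighborFinset_tokenGraph {M : Type*} [AddCommMonoid M] [DecidableRel G.Adj]
    [DecidableRel (tokenGraph G k).Adj] (A : {s : Finset V // s.card = k})
    (g : {s : Finset V // s.card = k} → M) :
    ∑ B ∈ (tokenGraph G k).neighborFinset A, g B =
      ∑ d : G.Dart with d.fst ∈ A.1 ∧ d.snd ∉ A.1,
        g (tokenPerm (swap d.fst d.snd) k A) := by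
  symm
  refine Finset.sum_bij (fun d _ => tokenPerm (swap d.fst d.snd) k A) ?_ ?_ ?_ fun _ _ => rfl
  · intro d hd
    rw [Finset.mem_filter] at hd
    exact (SimpleGraph.mem_neighborFinset _ _ _).mpr
      (tokenGraph_adj_tokenPerm_swap d hd.2.1 hd.2.2)
  · intro d₁ hd₁ d₂ hd₂ he
    simp only [Finset.mem_filter, Finset.mem_univ, true_and] at hd₁ hd₂
    have hpair := congrArg Subtype.val he
    rw [coe_tokenPerm_apply, coe_tokenPerm_apply, Finset.map_swap_eq_symmDiff_s1 hd₁.1 hd₁.2,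
      Finset.map_swap_eq_symmDiff_s1 hd₂.1 hd₂.2, symmDiff_right_inj] at hpair
    obtain ⟨hfst, hsnd⟩ := Finset.eq_and_eq_of_pair_eq_pair hd₁.1 hd₂.2 hpair
    exact SimpleGraph.Dart.ext _ _ (Prod.ext hfst hsnd)
  · intro B hB
    obtain ⟨a, b, hab, ha, hb, hd⟩ := (SimpleGraph.mem_neighborFinset _ _ _).mp hB
    have hbA : b ∉ A.1 := by
      have : b ∈ symmDiff A.1 B.1 := by simp [hd]
      rw [Finset.mem_symmDiff] at this
      tauto
    refine ⟨⟨(a, b), hab⟩, by simp [ha, hbA], Subtype.ext ?_⟩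
    rw [coe_tokenPerm_apply, Finset.map_swap_eq_symmDiff_s1 ha hbA, ← hd,
      symmDiff_symmDiff_cancel_left]

lemma lapMat_tokenGraph_mulVec_apply_s1 [DecidableRel G.Adj] (f : {s : Finset V // s.card = k} → ℝ)
    (A : {s : Finset V // s.card = k}) :
    (lapMat (tokenGraph G k) *ᵥ f) A =
      ∑ d : G.Dart with d.fst ∈ A.1 ∧ d.snd ∉ A.1,
        (f A - f (tokenPerm (swap d.fst d.snd) k A)) := by
  classical
  rw [lapMat_eq_lapMatrix, SimpleGraph.lapMatrix_mulVec_apply,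
    ← SimpleGraph.card_neighborFinset_eq_degree, ← nsmul_eq_mul, ← Finset.sum_const,
    ← Finset.sum_sub_distrib, sum_neighborFinset_tokenGraph]

lemma two_smul_lapMat_tokenGraph_mulVec [DecidableRel G.Adj]
    (f : {s : Finset V // s.card = k} → ℝ) :
    (2 : ℝ) • (lapMat (tokenGraph G k) *ᵥ f) =
      ∑ d : G.Dart, (f - f ∘ tokenPerm (swap d.fst d.snd) k) := by
  ext A
  set t : G.Dart → ℝ := fun d => f A - f (tokenPerm (swap d.fst d.snd) k A)
  have hsplit : ∀ d, t d = (if d.fst ∈ A.1 ∧ d.snd ∉ A.1 then t d else 0) +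
      (if d.snd ∈ A.1 ∧ d.fst ∉ A.1 then t d else 0) := by
    intro d
    by_cases hiff : d.fst ∈ A.1 ↔ d.snd ∈ A.1
    · have hfix : tokenPerm (swap d.fst d.snd) k A = A :=
        Subtype.ext (Finset.map_swap_eq_self_s1 hiff)
      simp [t, hfix]
    · by_cases ha : d.fst ∈ A.1 <;> simp_all
  have hsymm : ∑ d, (if d.snd ∈ A.1 ∧ d.fst ∉ A.1 then t d else 0) =
      ∑ d, (if d.fst ∈ A.1 ∧ d.snd ∉ A.1 then t d else 0) := by
    refine Fintype.sum_equiv (Function.Involutive.toPerm _ SimpleGraph.Dart.symm_involutive) _ _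
      fun d => ?_
    simp [t, Equiv.swap_comm]
  simp only [Pi.smul_apply, Finset.sum_apply, Pi.sub_apply, Function.comp_apply, smul_eq_mul]
  rw [lapMat_tokenGraph_mulVec_apply_s1, Finset.sum_filter, two_mul]
  conv_rhs => rw [Finset.sum_congr rfl fun d _ => hsplit d, Finset.sum_add_distrib, hsymm]

lemma inclMatrix_transpose_mulVec_lapMat_tokenGraph (G : SimpleGraph V) (h k : ℕ)
    (f : {s : Finset V // s.card = k} → ℝ) :
    (inclMatrix V h k)ᵀ *ᵥ (lapMat (tokenGraph G k) *ᵥ f) =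
      lapMat (tokenGraph G h) *ᵥ ((inclMatrix V h k)ᵀ *ᵥ f) := by
  classical
  apply smul_right_injective _ (two_ne_zero : (2 : ℝ) ≠ 0)
  dsimp only
  rw [← mulVec_smul, two_smul_lapMat_tokenGraph_mulVec, two_smul_lapMat_tokenGraph_mulVec,
    mulVec_sum]
  simp only [mulVec_sub, inclMatrix_transpose_mulVec_comp_tokenPerm]

end

theorem stmt_1_general {n h k : ℕ} (G : SimpleGraph (Fin n)) (lam : ℝ)
    (u : {s : Finset (Fin n) // s.card = k} → ℝ)
    (heig : (lapMat (tokenGraph G k)).mulVec u = lam • u) :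
    (lapMat (tokenGraph G h)).mulVec ((inclMatrix (Fin n) h k)ᵀ.mulVec u) =
      lam • ((inclMatrix (Fin n) h k)ᵀ.mulVec u) := by
  rw [← inclMatrix_transpose_mulVec_lapMat_tokenGraph, heig, mulVec_smul]

theorem stmt_1 {n h k : ℕ} (G : SimpleGraph (Fin n)) (h1 : 1 ≤ h) (hhk : h < k)
    (hk : k ≤ n / 2) (lam : ℝ) (u : {s : Finset (Fin n) // s.card = k} → ℝ)
    (hu : u ≠ 0) (heig : (lapMat (tokenGraph G k)).mulVec u = lam • u)
    (hBu : (inclMatrix (Fin n) h k)ᵀ.mulVec u ≠ 0) :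
    (lapMat (tokenGraph G h)).mulVec ((inclMatrix (Fin n) h k)ᵀ.mulVec u) =
      lam • ((inclMatrix (Fin n) h k)ᵀ.mulVec u) :=
  stmt_1_general G lam u heig
end

section
/- Let n = 2ν+1 with ν ≥ 2, and let B*(0) be the ν×ν real tridiagonal matrix with diagonal entries (2, 4, 4, …, 4, 2) and all sub- and superdiagonal entries equal to 2. Then the multiset of eigenvalues of B*(0) is exactly {8 cos²(sπ/(2ν)) : s = 1, 2, …, ν}; in particular the eigenvalue for s = ν is 0, and the smallest nonzero eigenvalue 8 cos²((ν−1)π/(2ν)) is strictly greater than 4 sin²(π/(2ν+1)), the algebraic connectivity of the cycle C_{2ν+1}. -/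
/-!
For any `x`, the vector `v j = sin ((2j+1)x)` satisfies `2 v (j-1) + 4 v j + 2 v (j+1) =
8 cos² x · v j`, since `sin (a - 2x) + sin (a + 2x) = 2 sin a cos 2x`. Extended to all integers
it is odd about `-1/2`, so `v (-1) = -v 0`, and when `sin (2νx) = 0` it is also odd about
`ν - 1/2`, so `v ν = -v (ν-1)`: these two reflections turn the corner diagonal entries `2` of `B*(0)` into
the uniform stencil. Taking `x = sπ/(2ν)` for `s = 1, …, ν` gives `ν` eigenvalues
`8 cos² (sπ/(2ν)) = 4 + 4 cos (sπ/ν)`, pairwise distinct because `cos` is injective on `[0, π]`,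
hence the whole spectrum of the `ν × ν` matrix.
-/

open Finset Polynomial Real Matrix

noncomputable section

/-- The `ν × ν` real symmetric tridiagonal matrix `B*(0)`: diagonal entries `(2, 4, …, 4, 2)`
and all sub- and superdiagonal entries equal to `2`. -/
def Bstar0 (ν : ℕ) : Matrix (Fin ν) (Fin ν) ℝ :=
  fun i j =>
    if i = j then (if (i : ℕ) = 0 ∨ (i : ℕ) = ν - 1 then 2 else 4)
    else if (j : ℕ) = (i : ℕ) + 1 ∨ (i : ℕ) = (j : ℕ) + 1 then 2
    else 0

end

theorem Fin.sum_ite_intCast_eq {M : Type*} [AddCommMonoid M] (ν : ℕ) (k : ℤ) (g : ℤ → M) :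
    ∑ j : Fin ν, (if ((j : ℕ) : ℤ) = k then g j else 0) = if 0 ≤ k ∧ k < ν then g k else 0 := by
  split_ifs with hk
  · lift k to ℕ using hk.1
    rw [Finset.sum_eq_single ⟨k, by omega⟩ (fun j _ hj => if_neg (by simpa [Fin.ext_iff] using hj))
      (by simp)]
    simp
  · exact Finset.sum_eq_zero fun j _ => if_neg (by omega)

theorem Matrix.isRoot_charpoly_of_mulVec_eq_smul {K n : Type*} [Field K] [Fintype n]
    [DecidableEq n] {M : Matrix n n K} {v : n → K} {μ : K} (hv : v ≠ 0) (h : M *ᵥ v = μ • v) :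
    M.charpoly.IsRoot μ := by
  rw [IsRoot, eval_charpoly, ← exists_mulVec_eq_zero_iff]
  exact ⟨v, hv, by simp [sub_mulVec, h]⟩

theorem Bstar0_mulVec_apply {ν : ℕ} (hν : 2 ≤ ν) (f : ℤ → ℝ) (hf₀ : f (-1) = -f 0)
    (hfν : f ν = -f (ν - 1)) (i : Fin ν) :
    (Bstar0 ν *ᵥ fun j => f j) i = 2 * f (i - 1) + 4 * f i + 2 * f (i + 1) := by
  set d : ℝ := if (i : ℕ) = 0 ∨ (i : ℕ) = ν - 1 then 2 else 4
  have hrow : ∀ j : Fin ν, Bstar0 ν i j * f j =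
      (if ((j : ℕ) : ℤ) = i - 1 then 2 * f j else 0) + (if ((j : ℕ) : ℤ) = i then d * f j else 0)
        + (if ((j : ℕ) : ℤ) = i + 1 then 2 * f j else 0) := by
    intro j
    simp only [Bstar0, Fin.ext_iff, d]
    split_ifs <;> first | omega | ring
  simp only [mulVec, dotProduct, hrow, Finset.sum_add_distrib]
  rw [Fin.sum_ite_intCast_eq ν _ fun k => 2 * f k, Fin.sum_ite_intCast_eq ν _ fun k => d * f k,
    Fin.sum_ite_intCast_eq ν _ fun k => 2 * f k]
  have hi := i.isLt
  obtain h0 | hlast | hmid : (i : ℕ) = 0 ∨ (i : ℕ) = ν - 1 ∨ (0 < (i : ℕ) ∧ (i : ℕ) < ν - 1) := by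
    omega
  · simp only [d, h0, true_or, if_true]
    norm_num
    split_ifs <;> first | omega | linarith
  · have hz : ((i : ℕ) : ℤ) = ν - 1 := by omega
    simp only [hz]
    simp only [d, hlast, or_true, if_true]
    norm_num
    split_ifs <;> first | omega | linarith
  · simp only [d]
    split_ifs <;> first | omega | ring

theorem Matrix.charpoly_roots_eq_map_of_injOn {K n ι : Type*} [Field K] [Fintype n]
    [DecidableEq n] (M : Matrix n n K) (s : Finset ι) (μ : ι → K) (hμ : Set.InjOn μ s)
    (hcard : Fintype.card n ≤ s.card) (heig : ∀ i ∈ s, ∃ v ≠ 0, M *ᵥ v = μ i • v) :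
    M.charpoly.roots = s.val.map μ := by
  classical
  rw [← Finset.image_val_of_injOn hμ]
  refine roots_eq_of_natDegree_le_card_of_ne_zero ?_ ?_ M.charpoly_monic.ne_zero
  · simp only [Finset.forall_mem_image]
    intro i hi
    obtain ⟨v, hv, h⟩ := heig i hi
    exact isRoot_charpoly_of_mulVec_eq_smul hv h
  · rwa [charpoly_natDegree_eq_dim, Finset.card_image_of_injOn hμ]

theorem Bstar0_mulVec_sin {ν : ℕ} (hν : 2 ≤ ν) {x : ℝ} (hx : sin (2 * ν * x) = 0) :
    Bstar0 ν *ᵥ (fun j : Fin ν => sin ((2 * (j : ℝ) + 1) * x)) =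
      (8 * cos x ^ 2) • fun j : Fin ν => sin ((2 * (j : ℝ) + 1) * x) := by
  set f : ℤ → ℝ := fun k => sin ((2 * k + 1) * x)
  have hv : (fun j : Fin ν => sin ((2 * (j : ℝ) + 1) * x)) = fun j : Fin ν => f j := by
    ext j; simp [f]
  have hf₀ : f (-1) = -f 0 := by simp [f, ← sin_neg]; ring_nf
  have hfν : f ν = -f (ν - 1) := by
    have hsin : sin (2 * ν * x + x) + sin (2 * ν * x - x) = 0 := by
      rw [sin_add, sin_sub, hx]; ring
    simp only [f]
    push_cast
    rw [show (2 * (ν : ℝ) + 1) * x = 2 * ν * x + x by ring,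
      show (2 * ((ν : ℝ) - 1) + 1) * x = 2 * ν * x - x by ring]
    linarith
  ext i
  rw [hv, Bstar0_mulVec_apply hν f hf₀ hfν i]
  simp only [f, Pi.smul_apply, smul_eq_mul]
  push_cast
  rw [show (2 * ((i : ℝ) - 1) + 1) * x = (2 * i + 1) * x - 2 * x by ring,
    show (2 * ((i : ℝ) + 1) + 1) * x = (2 * i + 1) * x + 2 * x by ring,
    sin_sub, sin_add, cos_two_mul]
  ring

theorem Bstar0_hasEigenvector {ν : ℕ} (hν : 2 ≤ ν) {s : ℕ} (hs : s ∈ Finset.Icc 1 ν) :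
    ∃ v ≠ 0, Bstar0 ν *ᵥ v = (8 * cos (s * π / (2 * ν)) ^ 2) • v := by
  rw [Finset.mem_Icc] at hs
  set x := s * π / (2 * ν)
  have hs0 : (0 : ℝ) < s := by exact_mod_cast hs.1
  have hx0 : 0 < x := by positivity
  have hxπ : x < π := by
    have : (s : ℝ) ≤ ν := by exact_mod_cast hs.2
    rw [div_lt_iff₀ (by positivity)]
    nlinarith [pi_pos]
  have h2νx : 2 * ν * x = s * π := by simp only [x]; field_simp
  refine ⟨_, fun h => ?_, Bstar0_mulVec_sin hν (by rw [h2νx, sin_nat_mul_pi])⟩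
  have h0 := congrFun h ⟨0, by omega⟩
  simp only [Nat.cast_zero, Pi.zero_apply] at h0
  exact (sin_pos_of_pos_of_lt_pi hx0 hxπ).ne' (by simpa using h0)

theorem injOn_eight_cos_sq (ν : ℕ) :
    Set.InjOn (fun s : ℕ => 8 * cos (s * π / (2 * ν)) ^ 2) (Finset.Icc 1 ν) := by
  intro s hs t ht hst
  simp only [Finset.coe_Icc, Set.mem_Icc] at hs ht
  have hν0 : (0 : ℝ) < ν := by exact_mod_cast (by omega : 0 < ν)
  have mem : ∀ r : ℕ, r ≤ ν → r * π / ν ∈ Set.Icc 0 π := fun r hr => by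
    have : (r : ℝ) ≤ ν := by exact_mod_cast hr
    refine ⟨by positivity, ?_⟩
    rw [div_le_iff₀ hν0]
    nlinarith [pi_pos]
  have hcos : cos (s * π / ν) = cos (t * π / ν) := by
    have hdouble : ∀ r : ℕ, 8 * cos (r * π / (2 * ν)) ^ 2 = 4 + 4 * cos (r * π / ν) := fun r => by
      rw [cos_sq, show 2 * (r * π / (2 * ν)) = r * π / ν by field_simp]
      ring
    simp only [hdouble] at hst
    linarith
  have harg := injOn_cos (mem s hs.2) (mem t ht.2) hcos
  field_simp at harg
  exact_mod_cast harg

theorem sin_sq_pi_div_succ_lt {m : ℝ} (hm : 2 ≤ m) : sin (π / (m + 1)) ^ 2 < sin (π / m) ^ 2 := by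
  have hpos : 0 < π / (m + 1) := div_pos pi_pos (by linarith)
  have hlt : π / (m + 1) < π / m := div_lt_div_of_pos_left pi_pos (by linarith) (by linarith)
  have hle : π / m ≤ π / 2 := div_le_div_of_nonneg_left pi_pos.le two_pos hm
  have hsin : sin (π / (m + 1)) < sin (π / m) :=
    strictMonoOn_sin ⟨by linarith [pi_pos], by linarith⟩ ⟨by linarith [pi_pos], hle⟩ hlt
  exact pow_lt_pow_left₀ hsin (sin_pos_of_pos_of_lt_pi hpos (by linarith [pi_pos])).le two_ne_zero

theorem stmt_17 {ν : ℕ} (hν : 2 ≤ ν) :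
    (Bstar0 ν).charpoly.roots =
        (Finset.Icc 1 ν).val.map (fun s : ℕ => 8 * Real.cos ((s : ℝ) * π / (2 * (ν : ℝ))) ^ 2) ∧
      8 * Real.cos ((ν : ℝ) * π / (2 * (ν : ℝ))) ^ 2 = 0 ∧
      4 * Real.sin (π / (2 * (ν : ℝ) + 1)) ^ 2 <
        8 * Real.cos (((ν : ℝ) - 1) * π / (2 * (ν : ℝ))) ^ 2 := by
  refine ⟨?_, ?_, ?_⟩
  · exact (Bstar0 ν).charpoly_roots_eq_map_of_injOn _ _ (injOn_eight_cos_sq ν) (by simp)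
      fun s hs => Bstar0_hasEigenvector hν hs
  · rw [show (ν : ℝ) * π / (2 * ν) = π / 2 by field_simp, cos_pi_div_two]
    ring
  · rw [show ((ν : ℝ) - 1) * π / (2 * ν) = π / 2 - π / (2 * ν) by field_simp, cos_pi_div_two_sub]
    have := sin_sq_pi_div_succ_lt (m := 2 * ν) (by norm_cast; omega)
    linarith [sq_nonneg (sin (π / (2 * ν)))]
end
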